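/- For any small categories A and B, there is a natural isomorphism of categories ~(A × B) ≅ ~A × ~B, where ~C denotes the free groupoid completion (localization at all morphisms) of C — equivalently, the groupoidification functor preserves finite products when applied to the categories [j] and [k̃]: ([j] × [k])~ computed objectwise agrees with [j]~ × [k]~. -/

import Mathlib

/-!
The unit `η_X : X ⥤ ~X` of the adjunction is a strict universal arrow: every functor from `X`
to a groupoid factors through it in exactly one way, up to equality of functors. This property
is stable under `- × 𝟭 E`, because currying identifies functors `~X × E ⥤ G` with functors
`~X ⥤ (E ⥤ G)` and `E ⥤ G` is again a groupoid. Using swaps, `η_A × η_B` is then a strict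
universal arrow as well, so it is isomorphic to `η_{A × B}` as an object under `A × B`.
-/

open CategoryTheory

universe u

namespace CategoryTheory

instance isGroupoidFunctor {C D : Type*} [Category* C] [Category* D] [IsGroupoid D] :
    IsGroupoid (C ⥤ D) where
  all_isIso f := NatIso.isIso_of_isIso_app f

/-- Uniqueness is up to equality of functors, which is what yields an isomorphism of
categories rather than an equivalence. -/
def IsStrictGroupoidification {C D : Type u} [Category.{u} C] [Category.{u} D] (η : C ⥤ D) :
    Prop :=
  ∀ (G : Type u) [Category.{u} G] [IsGroupoid G], Function.Bijective fun F : D ⥤ G => η ⋙ F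

namespace IsStrictGroupoidification

variable {C D E : Type u} [Category.{u} C] [Category.{u} D] [Category.{u} E]

theorem comp {η₁ : C ⥤ D} {η₂ : D ⥤ E} (h₁ : IsStrictGroupoidification η₁)
    (h₂ : IsStrictGroupoidification η₂) : IsStrictGroupoidification (η₁ ⋙ η₂) :=
  fun G _ _ => (h₁ G).comp (h₂ G)

theorem swap : IsStrictGroupoidification (Prod.swap C D) := fun _ _ _ =>
  Function.bijective_iff_has_inverse.2 ⟨(Prod.swap D C ⋙ ·), fun _ => rfl, fun _ => rfl⟩

theorem prod_id {η : C ⥤ D} (h : IsStrictGroupoidification η) :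
    IsStrictGroupoidification (η.prod (𝟭 E)) := by
  intro G _ _
  have hcurry : (fun F : D × E ⥤ G => η.prod (𝟭 E) ⋙ F) =
      Functor.curryingEquiv ∘ (fun F => η ⋙ F) ∘ Functor.curryingEquiv.symm := by
    funext F
    change _ = η.prod (𝟭 E) ⋙ Functor.uncurry.obj (Functor.curry.obj F)
    rw [Functor.uncurry_obj_curry_obj]
  exact hcurry ▸ Functor.curryingEquiv.bijective.comp
    ((h (E ⥤ G)).comp Functor.curryingEquiv.symm.bijective)

theorem prod {C' D' : Type u} [Category.{u} C'] [Category.{u} D'] {η : C ⥤ D} {η' : C' ⥤ D'}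
    (h : IsStrictGroupoidification η) (h' : IsStrictGroupoidification η') :
    IsStrictGroupoidification (η.prod η') :=
  (((h.prod_id (E := C')).comp swap).comp (h'.prod_id (E := D))).comp swap

theorem nonempty_iso {D' : Type u} [Category.{u} D'] [IsGroupoid D] [IsGroupoid D']
    {η : C ⥤ D} {η' : C ⥤ D'} (h : IsStrictGroupoidification η)
    (h' : IsStrictGroupoidification η') : Nonempty (Cat.of D ≅ Cat.of D') := by
  obtain ⟨F, hF⟩ := (h D').2 η'
  obtain ⟨F', hF'⟩ := (h' D).2 η
  have hFF' : F ⋙ F' = 𝟭 D := (h D).1 (by simp only [← Functor.assoc, hF, hF']; rfl)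
  have hF'F : F' ⋙ F = 𝟭 D' := (h' D').1 (by simp only [← Functor.assoc, hF, hF']; rfl)
  exact ⟨⟨F.toCatHom, F'.toCatHom, Cat.ext hFF', Cat.ext hF'F⟩⟩

end IsStrictGroupoidification

theorem Adjunction.isStrictGroupoidification_unit {L : Cat.{u, u} ⥤ Grpd.{u, u}}
    (adj : L ⊣ Grpd.forgetToCat) (X : Cat.{u, u}) :
    IsStrictGroupoidification (D := Grpd.forgetToCat.obj (L.obj X)) (adj.unit.app X).toFunctor := by
  intro G _ _
  let := Groupoid.ofIsGroupoid (C := G)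
  have hunit : (fun F : Grpd.forgetToCat.obj (L.obj X) ⥤ G => (adj.unit.app X).toFunctor ⋙ F) =
      Cat.Hom.equivFunctor _ _ ∘ adj.homEquiv X (Grpd.of G) :=
    funext fun F => (congrArg Cat.Hom.toFunctor (adj.homEquiv_unit X (Grpd.of G) F)).symm
  exact hunit ▸ (Cat.Hom.equivFunctor _ _).bijective.comp (adj.homEquiv X (Grpd.of G)).bijective

end CategoryTheory

theorem groupoidification_preserves_products
    (L : Cat.{u, u} ⥤ Grpd.{u, u}) (adj : L ⊣ Grpd.forgetToCat.{u, u})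
    (A B : Cat.{u, u}) :
    Nonempty (Grpd.forgetToCat.obj (L.obj (Cat.of (↑A × ↑B))) ≅
      Cat.of (↑(L.obj A) × ↑(L.obj B))) :=
  (adj.isStrictGroupoidification_unit (Cat.of (A × B))).nonempty_iso
    ((adj.isStrictGroupoidification_unit A).prod (adj.isStrictGroupoidification_unit B))
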